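/- arXiv:2410.01427 — 5 statements merged into one kernel-verified Lean document; each statement's English description precedes it below -/
import Mathlib

section
/- Let q : T → [0,1] be a function and γ : [0,1] → (0,∞] a non-decreasing function with ∫₀¹ (1/γ(s)) ds = 1. Define ρ(θ) = 1/γ(q(θ)) and the possibilistic upper expectation of ρ by Q̄ρ = ∫₀¹ (sup over θ with q(θ) > s of ρ(θ)) ds. Then Q̄ρ ≤ 1. -/
open MeasureTheory ENNReal Set

/-- Proposition 1: a calibrated reciprocal of a possibility contour is a regularizer:
its possibilistic upper expectation is at most 1. -/
theorem regularizer_upper_expectation_le_one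
    {T : Type*} [Nonempty T] (q : T → ℝ) (hq : ∀ θ, q θ ∈ Set.Icc (0:ℝ) 1)
    (γ : ℝ → ℝ≥0∞) (hγpos : ∀ s ∈ Set.Icc (0:ℝ) 1, 0 < γ s)
    (hγmono : MonotoneOn γ (Set.Icc (0:ℝ) 1))
    (hγint : ∫⁻ s in Set.Icc (0:ℝ) 1, (γ s)⁻¹ = 1) :
    (∫⁻ s in Set.Icc (0:ℝ) 1, ⨆ θ ∈ {θ : T | q θ > s}, (γ (q θ))⁻¹) ≤ 1 := by
  rw [← hγint]
  refine lintegral_mono_ae ?_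
  filter_upwards [ae_restrict_mem measurableSet_Icc] with s hs
  refine iSup₂_le fun θ hθ => ?_
  exact ENNReal.inv_le_inv.2 (hγmono hs (hq θ) (le_of_lt hθ))
end

section
/- Let (Ω, F, P) be a probability space and X, U independent random variables with X ≥ 0, E[X] ≤ 1, and U satisfying P(U ≤ u) ≤ u for all u ∈ [0,1]. Then for every α ∈ (0,1], P(X/U ≥ 1/α) ≤ α. -/
/-!
On the event `X / U ≥ 1/α` we have `U ≤ α X`. By independence the law of `(X, U)` is a product,
so integrating `P(U ≤ c) ≤ c` against the law of `X` gives `P(U ≤ α X) ≤ E[α X] ≤ α`.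
-/

open MeasureTheory ENNReal Set ProbabilityTheory

lemma ENNReal.le_mul_of_inv_le_div {a x u : ℝ≥0∞} (ha₀ : a ≠ 0) (ha : a ≠ ⊤)
    (h : a⁻¹ ≤ x / u) : u ≤ a * x :=
  calc u = a * a⁻¹ * u := by rw [ENNReal.mul_inv_cancel ha₀ ha, one_mul]
    _ ≤ a * (x * u⁻¹) * u := by gcongr; exact h
    _ = a * x * (u⁻¹ * u) := by ring
    _ ≤ a * x := mul_le_of_le_one_right' (ENNReal.inv_mul_le_one u)

lemma ProbabilityTheory.IndepFun.measure_preimage_eq_lintegral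
    {Ω β γ : Type*} [MeasurableSpace Ω] {mβ : MeasurableSpace β} {mγ : MeasurableSpace γ}
    {P : Measure Ω} [IsFiniteMeasure P] {X : Ω → β} {Y : Ω → γ}
    (hindep : IndepFun X Y P) (hX : Measurable X) (hY : Measurable Y)
    {S : Set (β × γ)} (hS : MeasurableSet S) :
    P ((fun ω ↦ (X ω, Y ω)) ⁻¹' S) = ∫⁻ x, P.map Y (Prod.mk x ⁻¹' S) ∂P.map X := by
  rw [← Measure.map_apply (hX.prodMk hY) hS,
    (indepFun_iff_map_prod_eq_prod_map_map hX.aemeasurable hY.aemeasurable).mp hindep,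
    Measure.prod_apply hS]

lemma measure_le_self_of_measure_le_ofReal {Ω : Type*} [MeasurableSpace Ω] {P : Measure Ω}
    [IsZeroOrProbabilityMeasure P] {U : Ω → ℝ≥0∞}
    (hU : ∀ u ∈ Icc (0:ℝ) 1, P {ω | U ω ≤ ENNReal.ofReal u} ≤ ENNReal.ofReal u)
    (c : ℝ≥0∞) : P {ω | U ω ≤ c} ≤ c := by
  rcases le_or_gt 1 c with hc | hc
  · exact prob_le_one.trans hc
  · simpa only [ofReal_toReal hc.ne_top] using
      hU c.toReal ⟨toReal_nonneg, toReal_le_of_le_ofReal zero_le_one (by simpa using hc.le)⟩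

lemma ProbabilityTheory.IndepFun.measure_le_le_lintegral {Ω : Type*} [MeasurableSpace Ω]
    {P : Measure Ω} [IsFiniteMeasure P] {X U : Ω → ℝ≥0∞} (hindep : IndepFun X U P)
    (hX : Measurable X) (hU : Measurable U)
    (hUunif : ∀ c, P {ω | U ω ≤ c} ≤ c) :
    P {ω | U ω ≤ X ω} ≤ ∫⁻ ω, X ω ∂P := by
  have hS : MeasurableSet {p : ℝ≥0∞ × ℝ≥0∞ | p.2 ≤ p.1} :=
    measurableSet_le measurable_snd measurable_fst
  calc P {ω | U ω ≤ X ω}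
      = ∫⁻ x, P.map U (Iic x) ∂P.map X := hindep.measure_preimage_eq_lintegral hX hU hS
    _ ≤ ∫⁻ x, x ∂P.map X := lintegral_mono fun x ↦ by
        rw [Measure.map_apply hU measurableSet_Iic]; exact hUunif x
    _ = ∫⁻ ω, X ω ∂P := lintegral_map measurable_id hX

/-- Uniformly-randomized Markov inequality: if `X, U` are independent nonnegative
(extended-real-valued) random variables with `E[X] ≤ 1` and `U` stochastically no
smaller than `Unif(0,1)`, then `P(X/U ≥ 1/α) ≤ α` for all `α ∈ (0,1]`.
(Division in `ℝ≥0∞` gives `x/0 = ∞` for `x > 0`, as in the convention.) -/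
theorem randomized_markov_inequality
    {Ω : Type*} [MeasurableSpace Ω] (P : Measure Ω) [IsProbabilityMeasure P]
    (X U : Ω → ℝ≥0∞) (hX : Measurable X) (hU : Measurable U)
    (hindep : IndepFun X U P)
    (hEX : ∫⁻ ω, X ω ∂P ≤ 1)
    (hUcdf : ∀ u ∈ Set.Icc (0:ℝ) 1, P {ω | U ω ≤ ENNReal.ofReal u} ≤ ENNReal.ofReal u) :
    ∀ α ∈ Set.Ioc (0:ℝ) 1,
      P {ω | (ENNReal.ofReal α)⁻¹ ≤ X ω / U ω} ≤ ENNReal.ofReal α := by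
  rintro α ⟨hα, -⟩
  set a := ENNReal.ofReal α
  have ha₀ : a ≠ 0 := ofReal_ne_zero_iff.mpr hα
  calc P {ω | a⁻¹ ≤ X ω / U ω}
      ≤ P {ω | U ω ≤ a * X ω} := measure_mono fun ω ↦ le_mul_of_inv_le_div ha₀ ofReal_ne_top
    _ ≤ ∫⁻ ω, a * X ω ∂P :=
        (hindep.comp (measurable_const_mul a) measurable_id).measure_le_le_lintegral
          (hX.const_mul a) hU (measure_le_self_of_measure_le_ofReal hUcdf)
    _ = a * ∫⁻ ω, X ω ∂P := lintegral_const_mul a hX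
    _ ≤ a := mul_le_of_le_one_right' hEX
end

section
/- Let q : T → [0,1] be a possibility contour and let Q be a probability measure on T such that Q({θ : q(θ) ≤ α}) ≤ α for all α ∈ [0,1]. Let γ : [0,1] → (0,∞] be non-decreasing with ∫₀¹ (1/γ(s)) ds = 1. Then E_{Θ∼Q}[1/γ(q(Θ))] ≤ 1. -/
open MeasureTheory ENNReal Set

/-- For any probability `Q` in the credal set of the possibility measure with contour `q`
(i.e., `Q(q(Θ) ≤ α) ≤ α` for all `α ∈ [0,1]`), the calibrated regularizer
`ρ = 1/(γ ∘ q)` has `Q`-expectation at most 1. -/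
theorem credal_expectation_of_regularizer_le_one
    {T : Type*} [MeasurableSpace T] (q : T → ℝ) (hqm : Measurable q)
    (hq : ∀ θ, q θ ∈ Set.Icc (0:ℝ) 1)
    (Q : Measure T) [IsProbabilityMeasure Q]
    (hcredal : ∀ α ∈ Set.Icc (0:ℝ) 1, Q {θ | q θ ≤ α} ≤ ENNReal.ofReal α)
    (γ : ℝ → ℝ≥0∞) (hγpos : ∀ s ∈ Set.Icc (0:ℝ) 1, 0 < γ s)
    (hγmono : MonotoneOn γ (Set.Icc (0:ℝ) 1))
    (hγint : ∫⁻ s in Set.Icc (0:ℝ) 1, (γ s)⁻¹ = 1) :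
    ∫⁻ θ, (γ (q θ))⁻¹ ∂Q ≤ 1 := by
  classical
  -- clamp to [0,1]
  set c : ℝ → ℝ := fun s => max 0 (min 1 s) with hc
  have hc_mem : ∀ s, c s ∈ Set.Icc (0:ℝ) 1 := by
    intro s
    constructor
    · exact le_max_left _ _
    · exact max_le (by norm_num) (min_le_left _ _)
  have hc_mono : Monotone c := fun a b hab =>
    max_le_max le_rfl (min_le_min le_rfl hab)
  have hc_id : ∀ s ∈ Set.Icc (0:ℝ) 1, c s = s := by
    intro s hs
    simp [hc, max_eq_right, min_eq_right, hs.1, hs.2]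
  -- real-valued antitone function
  set h : ℝ → ℝ := fun s => ((γ (c s))⁻¹).toReal with hh
  have hfin : ∀ s, (γ (c s))⁻¹ ≠ ∞ := by
    intro s
    simpa [ENNReal.inv_ne_top] using (hγpos _ (hc_mem s)).ne'
  have h_ofReal : ∀ s, ENNReal.ofReal (h s) = (γ (c s))⁻¹ := fun s =>
    ENNReal.ofReal_toReal (hfin s)
  have h_anti : Antitone h := by
    intro a b hab
    have h1 : γ (c a) ≤ γ (c b) := hγmono (hc_mem a) (hc_mem b) (hc_mono hab)
    have h2 : (γ (c b))⁻¹ ≤ (γ (c a))⁻¹ := ENNReal.inv_le_inv.mpr h1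
    exact ENNReal.toReal_mono (hfin a) h2
  have h_mble : Measurable h := h_anti.measurable
  have h_nn : ∀ s, 0 ≤ h s := fun s => ENNReal.toReal_nonneg
  -- rewrite LHS via layer cake
  have hq_eq : ∀ θ, (γ (q θ))⁻¹ = ENNReal.ofReal (h (q θ)) := by
    intro θ
    rw [h_ofReal, hc_id _ (hq θ)]
  have LHS_eq : ∫⁻ θ, (γ (q θ))⁻¹ ∂Q = ∫⁻ t in Set.Ioi (0:ℝ), Q {θ | t < h (q θ)} := by
    simp_rw [hq_eq]
    exact lintegral_eq_lintegral_meas_lt Q (Filter.Eventually.of_forall fun θ => h_nn _)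
      ((h_mble.comp hqm).aemeasurable)
  -- rewrite RHS via layer cake
  have RHS_eq : (1 : ℝ≥0∞) =
      ∫⁻ t in Set.Ioi (0:ℝ), (volume.restrict (Set.Icc (0:ℝ) 1)) {s | t < h s} := by
    rw [← hγint]
    have : ∀ᵐ s ∂(volume.restrict (Set.Icc (0:ℝ) 1)), (γ s)⁻¹ = ENNReal.ofReal (h s) := by
      filter_upwards [ae_restrict_mem measurableSet_Icc] with s hs
      rw [h_ofReal, hc_id _ hs]
    rw [lintegral_congr_ae this]
    exact lintegral_eq_lintegral_meas_lt _ (Filter.Eventually.of_forall fun s => h_nn s)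
      h_mble.aemeasurable
  rw [LHS_eq, RHS_eq]
  -- compare slice by slice
  refine lintegral_mono fun t => ?_
  rw [Measure.restrict_apply (measurableSet_lt measurable_const h_mble)]
  set A : Set ℝ := {s | t < h s} ∩ Set.Icc (0:ℝ) 1 with hA
  by_cases hne : A.Nonempty
  · set a : ℝ := sSup A with ha
    have hbdd : BddAbove A := BddAbove.mono Set.inter_subset_right (bddAbove_Icc)
    have haI : a ∈ Set.Icc (0:ℝ) 1 := by
      refine ⟨?_, csSup_le hne fun y hy => hy.2.2⟩
      obtain ⟨x, hx⟩ := hne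
      exact le_trans hx.2.1 (le_csSup hbdd hx)
    have hQ : Q {θ | t < h (q θ)} ≤ ENNReal.ofReal a := by
      refine le_trans (measure_mono ?_) (hcredal a haI)
      intro θ hθ
      exact le_csSup hbdd ⟨hθ, hq θ⟩
    refine hQ.trans ?_
    have hsub : Set.Ico (0:ℝ) a ⊆ A := by
      intro s hs
      obtain ⟨x, hxA, hx⟩ := exists_lt_of_lt_csSup hne hs.2
      exact ⟨lt_of_lt_of_le hxA.1 (h_anti hx.le), hs.1, le_trans hx.le hxA.2.2⟩
    calc ENNReal.ofReal a = volume (Set.Ico (0:ℝ) a) := by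
          rw [Real.volume_Ico, sub_zero]
      _ ≤ volume A := measure_mono hsub
  · have : {θ | t < h (q θ)} = ∅ := by
      ext θ
      simp only [Set.mem_setOf_eq, Set.mem_empty_iff_false, iff_false]
      intro hθ
      exact hne ⟨q θ, hθ, hq θ⟩
    simp [this]
end

section
/- Let (Z, F, P_ω) for ω ∈ O be a family of probability measures and let e : Z × T → [0,∞) satisfy: for each θ ∈ T and each ω with f(ω) = θ, E_{P_ω}[e(Z, θ)] ≤ 1, where f : O → T. Let Q be a probability measure on T, R a probability measure on O with pushforward f_*R = Q, and ρ : T → [0,∞] with E_{Θ∼Q}[ρ(Θ)] ≤ 1. Then under the joint distribution where Ω ∼ R and Z | Ω = ω has law P_ω, E[ρ(f(Ω)) · e(Z, f(Ω))] ≤ 1. -/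
open MeasureTheory ENNReal Set

theorem lintegral_comp_mul_le_lintegral_map {α β : Type*} [MeasurableSpace α]
    [MeasurableSpace β] {μ : Measure α} {f : α → β} (hf : AEMeasurable f μ)
    {g : β → ℝ≥0∞} (hg : AEMeasurable g (μ.map f)) {h : α → ℝ≥0∞} (h_le : h ≤ᵐ[μ] 1) :
    ∫⁻ a, g (f a) * h a ∂μ ≤ ∫⁻ b, g b ∂(μ.map f) :=
  calc ∫⁻ a, g (f a) * h a ∂μ
      ≤ ∫⁻ a, g (f a) ∂μ := lintegral_mono_ae <| h_le.mono fun _ ha =>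
        mul_le_of_le_one_right' ha
    _ = ∫⁻ b, g b ∂(μ.map f) := (lintegral_map' hg hf).symm

theorem regularized_eprocess_expectation_le_one_general
    {Z O T : Type*} [MeasurableSpace Z] [MeasurableSpace O] [MeasurableSpace T]
    (P : O → Measure Z)
    (f : O → T) (hf : Measurable f)
    (e : Z → T → ℝ≥0∞)
    (he : ∀ θ : T, ∀ ω : O, f ω = θ → ∫⁻ z, e z θ ∂(P ω) ≤ 1)
    (Q : Measure T)
    (R : Measure O) (hmap : R.map f = Q)
    (ρ : T → ℝ≥0∞) (hρm : Measurable ρ)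
    (hρ : ∫⁻ θ, ρ θ ∂Q ≤ 1) :
    ∫⁻ ω, ρ (f ω) * ∫⁻ z, e z (f ω) ∂(P ω) ∂ R ≤ 1 := by
  subst hmap
  exact (lintegral_comp_mul_le_lintegral_map hf.aemeasurable hρm.aemeasurable
    (Filter.Eventually.of_forall fun ω => he _ ω rfl)).trans hρ

/-- Core computation in Theorem 1 (regularized Ville's inequality, expectation form):
if `e(·,θ)` is an e-variable for every `ω` with `f ω = θ`, the prior `Q` is the
pushforward of `R` under `f`, and the regularizer satisfies `E_{Θ∼Q}[ρ(Θ)] ≤ 1`, then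
under the joint law (`Ω ∼ R`, `Z | Ω = ω ∼ P_ω`) one has
`E[ρ(f(Ω)) · e(Z, f(Ω))] ≤ 1`. -/
theorem regularized_eprocess_expectation_le_one
    {Z O T : Type*} [MeasurableSpace Z] [MeasurableSpace O] [MeasurableSpace T]
    (P : O → Measure Z) (hP : ∀ ω, IsProbabilityMeasure (P ω))
    (f : O → T) (hf : Measurable f)
    (e : Z → T → ℝ≥0∞) (he_meas : ∀ θ, Measurable (fun z => e z θ))
    (he : ∀ θ : T, ∀ ω : O, f ω = θ → ∫⁻ z, e z θ ∂(P ω) ≤ 1)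
    (Q : Measure T) [IsProbabilityMeasure Q]
    (R : Measure O) [IsProbabilityMeasure R] (hmap : R.map f = Q)
    (ρ : T → ℝ≥0∞) (hρm : Measurable ρ)
    (hρ : ∫⁻ θ, ρ θ ∂Q ≤ 1) :
    ∫⁻ ω, ρ (f ω) * ∫⁻ z, e z (f ω) ∂(P ω) ∂ R ≤ 1 :=
  regularized_eprocess_expectation_le_one_general P f hf e he Q R hmap ρ hρm hρ
end

section
/- Let q : T → [0,1] be a possibility contour and g : T → [0,∞) a bounded function. Define the possibilistic upper expectation Q̄g = ∫₀¹ (sup over θ with q(θ) > s of g(θ)) ds. Then for any probability measure Q on T satisfying Q({θ : q(θ) ≤ α}) ≤ α for all α ∈ [0,1], one has E_{Θ∼Q}[g(Θ)] ≤ Q̄g. -/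
open MeasureTheory ENNReal Set

/-- The Choquet-type possibilistic integral dominates the ordinary expectation for
every probability measure in the credal set of the possibility measure with
contour `q`. -/
theorem credal_expectation_le_choquet
    {T : Type*} [MeasurableSpace T] (q : T → ℝ) (hqm : Measurable q)
    (hq : ∀ θ, q θ ∈ Set.Icc (0:ℝ) 1)
    (g : T → ℝ≥0∞) (hgm : Measurable g) (hgbdd : ∃ C : ℝ≥0∞, C ≠ ⊤ ∧ ∀ θ, g θ ≤ C)
    (Q : Measure T) [IsProbabilityMeasure Q]
    (hcredal : ∀ α ∈ Set.Icc (0:ℝ) 1, Q {θ | q θ ≤ α} ≤ ENNReal.ofReal α) :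
    ∫⁻ θ, g θ ∂Q ≤ ∫⁻ s in Set.Icc (0:ℝ) 1, ⨆ θ ∈ {θ : T | q θ > s}, g θ := by
  obtain ⟨C, hCtop, hgC⟩ := hgbdd
  set G : ℝ → ℝ≥0∞ := fun s => ⨆ θ ∈ {θ : T | q θ > s}, g θ with hGdef
  have hgne : ∀ θ, g θ ≠ ⊤ := fun θ => ne_top_of_le_ne_top hCtop (hgC θ)
  have hGC : ∀ s, G s ≤ C := fun s => iSup₂_le fun θ _ => hgC θ
  have hGne : ∀ s, G s ≠ ⊤ := fun s => ne_top_of_le_ne_top hCtop (hGC s)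
  have hGanti : Antitone G := by
    intro s s' hss'
    exact iSup₂_le fun θ hθ => le_iSup₂_of_le θ (lt_of_le_of_lt hss' hθ) le_rfl
  have hGmeas : Measurable G := hGanti.measurable
  -- rewrite LHS via layer cake
  have hL : ∫⁻ θ, g θ ∂Q = ∫⁻ t in Ioi (0:ℝ), Q {θ | t < (g θ).toReal} := by
    rw [← lintegral_eq_lintegral_meas_lt Q
      (Filter.Eventually.of_forall fun θ => ENNReal.toReal_nonneg)
      (hgm.ennreal_toReal.aemeasurable)]
    exact lintegral_congr fun θ => (ENNReal.ofReal_toReal (hgne θ)).symm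
  have hR : ∫⁻ s in Set.Icc (0:ℝ) 1, G s
      = ∫⁻ t in Ioi (0:ℝ), (volume.restrict (Set.Icc (0:ℝ) 1)) {s | t < (G s).toReal} := by
    rw [← lintegral_eq_lintegral_meas_lt (volume.restrict (Set.Icc (0:ℝ) 1))
      (Filter.Eventually.of_forall fun s => ENNReal.toReal_nonneg)
      (hGmeas.ennreal_toReal.aemeasurable)]
    exact lintegral_congr fun s => (ENNReal.ofReal_toReal (hGne s)).symm
  rw [hL]
  show _ ≤ ∫⁻ s in Set.Icc (0:ℝ) 1, G s
  rw [hR]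
  refine lintegral_mono_ae ((ae_restrict_iff' measurableSet_Ioi).mpr ?_)
  filter_upwards with t ht
  -- now t > 0
  set S : Set T := {θ | ENNReal.ofReal t < g θ} with hSdef
  set α : ℝ := sSup (q '' S) with hαdef
  have hbdd : BddAbove (q '' S) := ⟨1, by rintro _ ⟨θ, _, rfl⟩; exact (hq θ).2⟩
  have hα0 : 0 ≤ α := Real.sSup_nonneg (by rintro _ ⟨θ, _, rfl⟩; exact (hq θ).1)
  have hα1 : α ≤ 1 := Real.sSup_le (by rintro _ ⟨θ, _, rfl⟩; exact (hq θ).2) zero_le_one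
  have hset : {θ | t < (g θ).toReal} = S := by
    ext θ
    simp only [mem_setOf_eq, hSdef]
    exact (ENNReal.ofReal_lt_iff_lt_toReal (le_of_lt ht) (hgne θ)).symm
  have h1 : Q {θ | t < (g θ).toReal} ≤ ENNReal.ofReal α := by
    rw [hset]
    refine le_trans (measure_mono ?_) (hcredal α ⟨hα0, hα1⟩)
    intro θ hθ
    exact le_csSup hbdd ⟨θ, hθ, rfl⟩
  refine h1.trans ?_
  -- lower bound on the Lebesgue side
  have hmeasset : MeasurableSet {s : ℝ | t < (G s).toReal} :=
    measurableSet_lt measurable_const hGmeas.ennreal_toReal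
  rw [Measure.restrict_apply hmeasset]
  have hsub : Ico (0:ℝ) α ⊆ {s : ℝ | t < (G s).toReal} ∩ Set.Icc (0:ℝ) 1 := by
    rintro s ⟨hs0, hsα⟩
    have hne : (q '' S).Nonempty := by
      by_contra h
      rw [not_nonempty_iff_eq_empty] at h
      rw [hαdef, h, Real.sSup_empty] at hsα
      exact absurd (hs0.trans_lt hsα) (lt_irrefl 0)
    obtain ⟨x, ⟨θ, hθS, rfl⟩, hsx⟩ := exists_lt_of_lt_csSup hne hsα
    have hGs : ENNReal.ofReal t < G s :=
      lt_of_lt_of_le hθS (le_iSup₂_of_le θ hsx le_rfl)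
    refine ⟨(ENNReal.ofReal_lt_iff_lt_toReal (le_of_lt ht) (hGne s)).mp hGs, hs0, hsα.le.trans hα1⟩
  calc ENNReal.ofReal α = volume (Ico (0:ℝ) α) := by
        rw [Real.volume_Ico, sub_zero]
    _ ≤ volume ({s : ℝ | t < (G s).toReal} ∩ Set.Icc (0:ℝ) 1) := measure_mono hsub
end
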